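/- (Theorem 4.2.1, weak monotone convergence) Let a < b be real numbers. For each n ∈ ℕ let sₙ : [a,b] → ℝ be gauge integrable over [a,b] with integral Sₙ, and suppose sₙ(x) ≤ s_{n+1}(x) ≤ g(x) for all n and all x ∈ [a,b], where g is some finite real-valued function on [a,b], so that f(x) := lim_{n→∞} sₙ(x) exists (finite) on [a,b]. If the sequence (Sₙ) is bounded with supremum F, then f is gauge integrable over [a,b] with integral F. -/

import Mathlib

/-- A tagged division of `[a, b]`: points `a = u 0 < u 1 < ⋯ < u n = b`
together with tags `t j ∈ [u j, u (j+1)]` for `j = 0, …, n-1`. -/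
structure TaggedDiv (a b : ℝ) where
  n : ℕ
  u : ℕ → ℝ
  t : ℕ → ℝ
  n_pos : 0 < n
  left : u 0 = a
  right : u n = b
  mono : ∀ j < n, u j < u (j + 1)
  tag_mem : ∀ j < n, t j ∈ Set.Icc (u j) (u (j + 1))

/-- A tagged division is `δ`-fine if each interval `[u j, u (j+1)]` is contained in
`(t j - δ (t j), t j + δ (t j))`. -/
def TaggedDiv.IsFine {a b : ℝ} (δ : ℝ → ℝ) (D : TaggedDiv a b) : Prop :=
  ∀ j < D.n,
    Set.Icc (D.u j) (D.u (j + 1)) ⊆ Set.Ioo (D.t j - δ (D.t j)) (D.t j + δ (D.t j))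

/-- The Riemann sum of `f` over a tagged division. -/
noncomputable def TaggedDiv.riemannSum {a b : ℝ} (D : TaggedDiv a b) (f : ℝ → ℝ) : ℝ :=
  ∑ j ∈ Finset.range D.n, f (D.t j) * (D.u (j + 1) - D.u j)

/-- A gauge on `[a, b]`: a function positive at each point of `[a, b]`. -/
def IsGauge (a b : ℝ) (δ : ℝ → ℝ) : Prop :=
  ∀ x ∈ Set.Icc a b, 0 < δ x

/-- `F` is the gauge (Henstock–Kurzweil) integral of `f` over `[a, b]`. -/
def HKIntegral (a b : ℝ) (f : ℝ → ℝ) (F : ℝ) : Prop :=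
  ∀ ε > 0, ∃ δ : ℝ → ℝ, IsGauge a b δ ∧
    ∀ D : TaggedDiv a b, D.IsFine δ → |D.riemannSum f - F| < ε

namespace TaggedDiv

variable {a b c : ℝ}

lemma u_le_u (D : TaggedDiv a b) : ∀ {i j : ℕ}, i ≤ j → j ≤ D.n → D.u i ≤ D.u j := by
  intro i j hij hj
  induction j with
  | zero => simp_all
  | succ k ih =>
    rcases Nat.eq_or_lt_of_le hij with rfl | h
    · exact le_rfl
    · exact le_trans (ih (Nat.lt_succ_iff.mp h) (le_of_lt (Nat.lt_of_succ_le hj)))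
        (le_of_lt (D.mono k (Nat.lt_of_succ_le hj)))

lemma u_mem (D : TaggedDiv a b) {j : ℕ} (hj : j ≤ D.n) : D.u j ∈ Set.Icc a b := by
  constructor
  · have h := D.u_le_u (Nat.zero_le j) hj
    rwa [D.left] at h
  · have h := D.u_le_u hj le_rfl
    rwa [D.right] at h

lemma t_mem (D : TaggedDiv a b) {j : ℕ} (hj : j < D.n) : D.t j ∈ Set.Icc a b := by
  obtain ⟨h1, h2⟩ := D.tag_mem j hj
  exact ⟨le_trans (D.u_mem hj.le).1 h1, le_trans h2 (D.u_mem hj).2⟩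

lemma IsFine.mono_gauge {D : TaggedDiv a b} {δ δ' : ℝ → ℝ} (h : D.IsFine δ)
    (hle : ∀ j < D.n, δ (D.t j) ≤ δ' (D.t j)) : D.IsFine δ' := by
  intro j hj
  refine (h j hj).trans ?_
  intro y hy
  have := hle j hj
  exact ⟨by linarith [hy.1], by linarith [hy.2]⟩

lemma riemannSum_le (D : TaggedDiv a b) {f g : ℝ → ℝ}
    (h : ∀ x ∈ Set.Icc a b, f x ≤ g x) : D.riemannSum f ≤ D.riemannSum g := by
  refine Finset.sum_le_sum fun j hj => ?_
  have hj' := Finset.mem_range.mp hj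
  exact mul_le_mul_of_nonneg_right (h _ (D.t_mem hj'))
    (sub_nonneg.mpr (D.mono j hj').le)

def single (c d t : ℝ) (hcd : c < d) (ht : t ∈ Set.Icc c d) : TaggedDiv c d where
  n := 1
  u := fun j => if j = 0 then c else d
  t := fun _ => t
  n_pos := one_pos
  left := by simp
  right := by simp
  mono := by intro j hj; interval_cases j; simpa using hcd
  tag_mem := by intro j hj; interval_cases j; simpa using ht

@[simp] lemma riemannSum_single (c d t : ℝ) (hcd : c < d) (ht : t ∈ Set.Icc c d) (f : ℝ → ℝ) :
    (single c d t hcd ht).riemannSum f = f t * (d - c) := by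
  simp [riemannSum, single]

lemma isFine_single {c d t : ℝ} (hcd : c < d) (ht : t ∈ Set.Icc c d) {δ : ℝ → ℝ}
    (h : Set.Icc c d ⊆ Set.Ioo (t - δ t) (t + δ t)) : (single c d t hcd ht).IsFine δ := by
  intro j hj
  have hj0 : j = 0 := Nat.lt_one_iff.mp hj
  subst hj0
  simpa [single] using h

def copy {a' b' : ℝ} (D : TaggedDiv a b) (ha : a = a') (hb : b = b') : TaggedDiv a' b' := by
  subst ha; subst hb; exact D

@[simp] lemma copy_riemannSum {a' b' : ℝ} (D : TaggedDiv a b) (ha : a = a') (hb : b = b')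
    (f : ℝ → ℝ) : (D.copy ha hb).riemannSum f = D.riemannSum f := by
  subst ha; subst hb; rfl

@[simp] lemma copy_isFine {a' b' : ℝ} (D : TaggedDiv a b) (ha : a = a') (hb : b = b')
    (δ : ℝ → ℝ) : (D.copy ha hb).IsFine δ ↔ D.IsFine δ := by
  subst ha; subst hb; exact Iff.rfl

lemma glue (D₁ : TaggedDiv a c) (D₂ : TaggedDiv c b) :
    ∃ D : TaggedDiv a b, (∀ f, D.riemannSum f = D₁.riemannSum f + D₂.riemannSum f) ∧
      ∀ δ : ℝ → ℝ, D₁.IsFine δ → D₂.IsFine δ → D.IsFine δ := by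
  set uu : ℕ → ℝ := fun j => if j < D₁.n then D₁.u j else D₂.u (j - D₁.n) with huu
  set tt : ℕ → ℝ := fun j => if j < D₁.n then D₁.t j else D₂.t (j - D₁.n) with htt
  have hu₁ : ∀ j ≤ D₁.n, uu j = D₁.u j := by
    intro j hj
    rcases lt_or_eq_of_le hj with h | rfl
    · simp [huu, h]
    · simp [huu, D₂.left, D₁.right]
  have hu₂ : ∀ j, D₁.n ≤ j → uu j = D₂.u (j - D₁.n) := by
    intro j hj
    rcases eq_or_lt_of_le hj with rfl | h
    · simp [huu, D₂.left, D₁.right]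
    · simp [huu, not_lt.mpr hj]
  have ht₁ : ∀ j < D₁.n, tt j = D₁.t j := fun j hj => by simp [htt, hj]
  have ht₂ : ∀ j, D₁.n ≤ j → tt j = D₂.t (j - D₁.n) := fun j hj => by
    simp [htt, not_lt.mpr hj]
  refine ⟨⟨D₁.n + D₂.n, uu, tt, by have := D₁.n_pos; omega,
    by rw [hu₁ 0 (Nat.zero_le _)]; exact D₁.left,
    by rw [hu₂ _ (Nat.le_add_right _ _), Nat.add_sub_cancel_left]; exact D₂.right,
    ?_, ?_⟩, ?_, ?_⟩
  · intro j hj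
    rcases le_or_gt (j + 1) D₁.n with h | h
    · rw [hu₁ j (Nat.le_of_succ_le h), hu₁ (j+1) h]
      exact D₁.mono j (Nat.lt_of_succ_le h)
    · have hj1 : D₁.n ≤ j := Nat.lt_succ_iff.mp h
      rw [hu₂ j hj1, hu₂ (j+1) (le_trans hj1 (Nat.le_succ j)),
        show j + 1 - D₁.n = (j - D₁.n) + 1 by omega]
      exact D₂.mono (j - D₁.n) (by omega)
  · intro j hj
    rcases lt_or_ge j D₁.n with h | h
    · rw [ht₁ j h, hu₁ j h.le, hu₁ (j+1) h]
      exact D₁.tag_mem j h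
    · rw [ht₂ j h, hu₂ j h, hu₂ (j+1) (le_trans h (Nat.le_succ j)),
        show j + 1 - D₁.n = (j - D₁.n) + 1 by omega]
      exact D₂.tag_mem (j - D₁.n) (by omega)
  · intro f
    show ∑ j ∈ Finset.range (D₁.n + D₂.n), f (tt j) * (uu (j+1) - uu j) = _
    rw [Finset.sum_range_add]
    congr 1
    · refine Finset.sum_congr rfl fun j hj => ?_
      have hj' := Finset.mem_range.mp hj
      rw [ht₁ j hj', hu₁ j hj'.le, hu₁ (j+1) hj']
    · refine Finset.sum_congr rfl fun j hj => ?_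
      rw [ht₂ _ (Nat.le_add_right _ _), hu₂ _ (Nat.le_add_right _ _),
        hu₂ (D₁.n + j + 1) (by omega), show D₁.n + j - D₁.n = j by omega,
        show D₁.n + j + 1 - D₁.n = j + 1 by omega]
  · intro δ h1 h2 j hj
    have hj' : j < D₁.n + D₂.n := hj
    show Set.Icc (uu j) (uu (j+1)) ⊆ Set.Ioo (tt j - δ (tt j)) (tt j + δ (tt j))
    rcases lt_or_ge j D₁.n with h | h
    · rw [ht₁ j h, hu₁ j h.le, hu₁ (j+1) h]
      exact h1 j h
    · rw [ht₂ j h, hu₂ j h, hu₂ (j+1) (le_trans h (Nat.le_succ j)),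
        show j + 1 - D₁.n = (j - D₁.n) + 1 by omega]
      exact h2 (j - D₁.n) (by omega)

lemma glueFamily : ∀ (k : ℕ), 0 < k → ∀ (u : ℕ → ℝ) (G : ∀ j, TaggedDiv (u j) (u (j+1))),
    ∃ E : TaggedDiv (u 0) (u k),
      (∀ f, E.riemannSum f = ∑ j ∈ Finset.range k, (G j).riemannSum f) ∧
      ∀ δ : ℝ → ℝ, (∀ j < k, (G j).IsFine δ) → E.IsFine δ := by
  intro k
  induction k with
  | zero => omega
  | succ k ih =>
    intro _ u G
    rcases Nat.eq_zero_or_pos k with rfl | hk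
    · exact ⟨G 0, fun f => by simp, fun δ h => h 0 one_pos⟩
    · obtain ⟨E, hE1, hE2⟩ := ih hk u G
      obtain ⟨D, hD1, hD2⟩ := E.glue (G k)
      refine ⟨D, fun f => ?_, fun δ h => ?_⟩
      · rw [hD1, hE1, Finset.sum_range_succ]
      · exact hD2 δ (hE2 δ fun j hj => h j (hj.trans (Nat.lt_succ_self k)))
          (h k (Nat.lt_succ_self k))

end TaggedDiv

theorem cousin (c d : ℝ) (hcd : c < d) (δ : ℝ → ℝ) (hδ : IsGauge c d δ) :
    ∃ D : TaggedDiv c d, D.IsFine δ := by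
  set P : Set ℝ := {x | c < x ∧ x ≤ d ∧ ∃ D : TaggedDiv c x, D.IsFine δ} with hP
  have hδc : 0 < δ c := hδ c ⟨le_rfl, hcd.le⟩
  have hne : (min d (c + δ c / 2)) ∈ P := by
    refine ⟨lt_min hcd (by linarith), min_le_left _ _, ?_⟩
    have h1 : c < min d (c + δ c / 2) := lt_min hcd (by linarith)
    refine ⟨TaggedDiv.single c _ c h1 ⟨le_rfl, h1.le⟩, ?_⟩
    refine TaggedDiv.isFine_single h1 ⟨le_rfl, h1.le⟩ ?_
    intro y hy
    constructor
    · have := hy.1; linarith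
    · have := hy.2
      have : y ≤ c + δ c / 2 := le_trans this (min_le_right _ _)
      linarith
  have hbdd : BddAbove P := ⟨d, fun x hx => hx.2.1⟩
  set e := sSup P with he
  have hPne : P.Nonempty := ⟨_, hne⟩
  have hce : c < e := lt_of_lt_of_le hne.1 (le_csSup hbdd hne)
  have hed : e ≤ d := csSup_le hPne fun x hx => hx.2.1
  have hδe : 0 < δ e := hδ e ⟨hce.le, hed⟩
  obtain ⟨y, hyP, hy⟩ := exists_lt_of_lt_csSup hPne (show max c (e - δ e) < e by
    rcases le_total c (e - δ e) with h | h
    · rw [max_eq_right h]; linarith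
    · rw [max_eq_left h]; exact hce)
  have hye : y ≤ e := le_csSup hbdd hyP
  obtain ⟨hcy, hyd, D, hD⟩ := hyP
  rcases eq_or_lt_of_le hyd with rfl | hyd'
  · exact ⟨D, hD⟩
  · set z := min d (e + δ e / 2) with hz
    have hez : e ≤ z := le_min hed (by linarith)
    have hyz : y < z := lt_min hyd' (by linarith [hy, le_max_right c (e - δ e)])
    have hte : e ∈ Set.Icc y z := ⟨hye, hez⟩
    have hfine : (TaggedDiv.single y z e hyz hte).IsFine δ := by
      refine TaggedDiv.isFine_single hyz hte ?_
      intro w hw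
      constructor
      · have := hw.1
        have := le_max_right c (e - δ e)
        linarith [hy]
      · have h2 : w ≤ e + δ e / 2 := le_trans hw.2 (min_le_right _ _)
        linarith
    obtain ⟨D', hD'1, hD'2⟩ := D.glue (TaggedDiv.single y z e hyz hte)
    have hzP : z ∈ P := ⟨lt_of_lt_of_le hce hez, min_le_left _ _, D', hD'2 δ hD hfine⟩
    have hze : z ≤ e := le_csSup hbdd hzP
    have : d ≤ e := by
      by_contra hde
      push_neg at hde
      have : z = d ∨ z = e + δ e / 2 := min_choice _ _
      rcases this with h | h
      · exact absurd (h ▸ hze) (not_le.mpr hde)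
      · linarith [h ▸ hze]
    have hde : e = d := le_antisymm hed this
    have hzd : z = d := le_antisymm (min_le_left _ _) (hde ▸ hez)
    obtain ⟨_, _, D'', hD''⟩ := hzP
    exact ⟨D''.copy rfl hzd, (D''.copy_isFine rfl hzd δ).mpr hD''⟩

open Filter

/-- **Theorem 4.2.1 (weak monotone convergence).** -/
theorem weak_monotone_convergence (a b : ℝ) (hab : a < b) (s : ℕ → ℝ → ℝ) (S : ℕ → ℝ)
    (g f : ℝ → ℝ) (F : ℝ)
    (hs : ∀ n : ℕ, HKIntegral a b (s n) (S n))
    (hmono : ∀ n : ℕ, ∀ x ∈ Set.Icc a b, s n x ≤ s (n + 1) x)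
    (hbdd : ∀ n : ℕ, ∀ x ∈ Set.Icc a b, s n x ≤ g x)
    (hconv : ∀ x ∈ Set.Icc a b, Tendsto (fun n => s n x) atTop (nhds (f x)))
    (hF : IsLUB (Set.range S) F) :
    HKIntegral a b f F := by
  intro ε hε
  have hba : 0 < b - a := sub_pos.mpr hab
  set η := ε / 5 with hηdef
  have hη0 : 0 < η := by positivity
  have hε5 : ε = 5 * η := by rw [hηdef]; ring
  -- gauges for each s n
  have hδ : ∀ n : ℕ, ∃ δ : ℝ → ℝ, IsGauge a b δ ∧
      ∀ D : TaggedDiv a b, D.IsFine δ → |D.riemannSum (s n) - S n| < η * (1/2)^(n+1) :=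
    fun n => hs n (η * (1/2)^(n+1)) (by positivity)
  choose δ₀ hδ₀g hδ₀ using hδ
  -- nested gauge
  set δ' : ℕ → ℝ → ℝ := fun n x =>
    (Finset.range (n+1)).inf' ⟨0, Finset.mem_range.mpr (by omega)⟩ (fun i => δ₀ i x) with hδ'def
  have hδ'le : ∀ n i, i ≤ n → ∀ x, δ' n x ≤ δ₀ i x := fun n i hi x =>
    Finset.inf'_le _ (Finset.mem_range.mpr (by omega))
  have hδ'pos : ∀ n, ∀ x ∈ Set.Icc a b, 0 < δ' n x := by
    intro n x hx
    rw [hδ'def]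
    exact (Finset.lt_inf'_iff _).mpr fun i _ => hδ₀g i x hx
  -- S n ≤ F and choice of N
  have hSF : ∀ n, S n ≤ F := fun n => hF.1 (Set.mem_range_self n)
  obtain ⟨-, ⟨N, rfl⟩, hN, -⟩ := hF.exists_between (show F - η < F by linarith)
  -- pointwise monotonicity and limits
  have hsmono : ∀ x ∈ Set.Icc a b, Monotone fun n => s n x :=
    fun x hx => monotone_nat_of_le_succ fun n => hmono n x hx
  have hsle : ∀ n : ℕ, ∀ x ∈ Set.Icc a b, s n x ≤ f x :=
    fun n x hx => Monotone.ge_of_tendsto (hsmono x hx) (hconv x hx) n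
  -- choose m x
  have hmx : ∀ x : ℝ, ∃ K : ℕ, N ≤ K ∧ (x ∈ Set.Icc a b → f x - η / (b - a) < s K x) := by
    intro x
    by_cases hx : x ∈ Set.Icc a b
    · have h1 : ∀ᶠ n in atTop, f x - η / (b - a) < s n x :=
        (hconv x hx).eventually (eventually_gt_nhds (sub_lt_self _ (div_pos hη0 hba)))
      obtain ⟨K, hK1, hK2⟩ := (h1.and (eventually_ge_atTop N)).exists
      exact ⟨K, hK2, fun _ => hK1⟩
    · exact ⟨N, le_rfl, fun h => absurd h hx⟩
  choose m hmN hmf using hmx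
  -- the gauge
  refine ⟨fun x => if x ∈ Set.Icc a b then δ' (m x) x else 1, ?_, ?_⟩
  · intro x hx
    show 0 < if x ∈ Set.Icc a b then δ' (m x) x else 1
    rw [if_pos hx]
    exact hδ'pos _ x hx
  intro D hD
  set δg : ℝ → ℝ := fun x => if x ∈ Set.Icc a b then δ' (m x) x else 1 with hδgdef
  have htm : ∀ j < D.n, D.t j ∈ Set.Icc a b := fun j hj => D.t_mem hj
  have hδg_at : ∀ j < D.n, δg (D.t j) = δ' (m (D.t j)) (D.t j) := fun j hj => by
    rw [hδgdef]; exact if_pos (htm j hj)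
  have hδgle : ∀ j < D.n, ∀ i ≤ m (D.t j), δg (D.t j) ≤ δ₀ i (D.t j) := by
    intro j hj i hi
    rw [hδg_at j hj]
    exact hδ'le _ i hi _
  have hfine : ∀ i : ℕ, (∀ j < D.n, i ≤ m (D.t j)) → D.IsFine (δ₀ i) := by
    intro i hi
    exact hD.mono_gauge fun j hj => hδgle j hj i (hi j hj)
  have hpow : ∀ k : ℕ, η * (1/2:ℝ)^(k+1) ≤ η := by
    intro k
    have h1 : (1/2:ℝ)^(k+1) ≤ 1 := pow_le_one₀ (by norm_num) (by norm_num)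
    nlinarith
  -- lower bound
  have hRN := abs_lt.mp (hδ₀ N D (hfine N fun j hj => hmN (D.t j)))
  have hlow : F - 2*η < D.riemannSum f := by
    have h1 : D.riemannSum (s N) ≤ D.riemannSum f := D.riemannSum_le (hsle N)
    have h3 := hpow N
    linarith [hRN.1]
  -- upper bound
  set M := (Finset.range D.n).sup fun j => m (D.t j) with hMdef
  have hmM : ∀ j < D.n, m (D.t j) ≤ M := by
    intro j hj
    rw [hMdef]
    exact Finset.le_sup (f := fun j => m (D.t j)) (Finset.mem_range.mpr hj)
  have hNM : N ≤ M := le_trans (hmN (D.t 0)) (hmM 0 D.n_pos)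
  -- key Henstock-style estimate
  have keyU : ∀ n : ℕ,
      (∑ j ∈ Finset.range D.n, if n < m (D.t j)
        then (s (n+1) (D.t j) - s n (D.t j)) * (D.u (j+1) - D.u j) else 0)
      ≤ (S (n+1) - S n) + (η * (1/2)^(n+1) + η * (1/2)^(n+2)) := by
    intro n
    set v : ℕ → ℝ := fun j => if j ≤ D.n then D.u j else b + ((j - D.n : ℕ) : ℝ) with hvdef
    have hv : ∀ j ≤ D.n, v j = D.u j := fun j hj => by rw [hvdef]; exact if_pos hj
    have hv2 : ∀ j, D.n ≤ j → v j = b + ((j - D.n : ℕ) : ℝ) := by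
      intro j hj
      rcases eq_or_lt_of_le hj with heq | h
      · rw [← heq, hv D.n le_rfl, D.right]; simp
      · rw [hvdef]; exact if_neg (by omega)
    have hv0 : v 0 = a := by rw [hv 0 (Nat.zero_le _), D.left]
    have hvn : v D.n = b := by rw [hv D.n le_rfl, D.right]
    have hvlt : ∀ j, v j < v (j+1) := by
      intro j
      rcases le_or_gt (j+1) D.n with h | h
      · rw [hv j (by omega), hv (j+1) h]
        exact D.mono j (by omega)
      · rcases le_or_gt j D.n with h2 | h2
        · have hje : j = D.n := by omega
          rw [hje, hvn, hv2 (D.n+1) (by omega), show D.n + 1 - D.n = 1 by omega]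
          norm_num
        · rw [hv2 j h2.le, hv2 (j+1) (by omega)]
          have : (j - D.n : ℕ) < (j + 1 - D.n : ℕ) := by omega
          have := (Nat.cast_lt (α := ℝ)).mpr this
          linarith
    have hGex : ∀ j : ℕ, ∃ G : TaggedDiv (v j) (v (j+1)), j < D.n →
        (G.IsFine (δ₀ n) ∧ G.IsFine (δ₀ (n+1)) ∧
          (if n < m (D.t j) then (s (n+1) (D.t j) - s n (D.t j)) * (D.u (j+1) - D.u j) else 0)
            ≤ G.riemannSum (s (n+1)) - G.riemannSum (s n)) := by
      intro j
      rcases lt_or_ge j D.n with hj | hj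
      · have hlt : D.u j < D.u (j+1) := D.mono j hj
        have he1 : D.u j = v j := (hv j hj.le).symm
        have he2 : D.u (j+1) = v (j+1) := (hv (j+1) hj).symm
        by_cases hnm : n < m (D.t j)
        · refine ⟨(TaggedDiv.single _ _ (D.t j) hlt (D.tag_mem j hj)).copy he1 he2, fun _ => ?_⟩
          have hsub : ∀ i, i ≤ m (D.t j) → Set.Icc (D.u j) (D.u (j+1)) ⊆
              Set.Ioo (D.t j - δ₀ i (D.t j)) (D.t j + δ₀ i (D.t j)) := by
            intro i hi
            refine (hD j hj).trans ?_
            have h1 := hδgle j hj i hi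
            intro y hy
            exact ⟨by linarith [hy.1], by linarith [hy.2]⟩
          refine ⟨?_, ?_, ?_⟩
          · rw [TaggedDiv.copy_isFine]
            exact TaggedDiv.isFine_single _ _ (hsub n (by omega))
          · rw [TaggedDiv.copy_isFine]
            exact TaggedDiv.isFine_single _ _ (hsub (n+1) (by omega))
          · rw [TaggedDiv.copy_riemannSum, TaggedDiv.copy_riemannSum,
              TaggedDiv.riemannSum_single, TaggedDiv.riemannSum_single, if_pos hnm]
            exact le_of_eq (by ring)
        · have hgauge : IsGauge (D.u j) (D.u (j+1)) (fun x => min (δ₀ n x) (δ₀ (n+1) x)) := by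
            intro x hx
            have hx' : x ∈ Set.Icc a b :=
              ⟨le_trans (D.u_mem hj.le).1 hx.1, le_trans hx.2 (D.u_mem hj).2⟩
            exact lt_min (hδ₀g n x hx') (hδ₀g (n+1) x hx')
          obtain ⟨C, hC⟩ := cousin _ _ hlt _ hgauge
          refine ⟨C.copy he1 he2, fun _ => ?_⟩
          have hC1 : C.IsFine (δ₀ n) := hC.mono_gauge fun i hi => min_le_left _ _
          have hC2 : C.IsFine (δ₀ (n+1)) := hC.mono_gauge fun i hi => min_le_right _ _
          refine ⟨(TaggedDiv.copy_isFine _ _ _ _).mpr hC1,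
            (TaggedDiv.copy_isFine _ _ _ _).mpr hC2, ?_⟩
          rw [if_neg hnm, TaggedDiv.copy_riemannSum, TaggedDiv.copy_riemannSum, sub_nonneg]
          refine C.riemannSum_le fun x hx => hmono n x
            ⟨le_trans (D.u_mem hj.le).1 hx.1, le_trans hx.2 (D.u_mem hj).2⟩
      · exact ⟨TaggedDiv.single _ _ (v j) (hvlt j) ⟨le_rfl, (hvlt j).le⟩,
          fun h => absurd h (not_lt.mpr hj)⟩
    choose G hG using hGex
    obtain ⟨E₀, hE₀1, hE₀2⟩ := TaggedDiv.glueFamily D.n D.n_pos v G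
    set E := E₀.copy hv0 hvn with hEdef
    have hEfine1 : E.IsFine (δ₀ n) :=
      (TaggedDiv.copy_isFine _ _ _ _).mpr (hE₀2 _ fun j hj => (hG j hj).1)
    have hEfine2 : E.IsFine (δ₀ (n+1)) :=
      (TaggedDiv.copy_isFine _ _ _ _).mpr (hE₀2 _ fun j hj => (hG j hj).2.1)
    have h1 := abs_lt.mp (hδ₀ n E hEfine1)
    have h2 := abs_lt.mp (hδ₀ (n+1) E hEfine2)
    have hsum : E.riemannSum (s (n+1)) - E.riemannSum (s n)
        = ∑ j ∈ Finset.range D.n, ((G j).riemannSum (s (n+1)) - (G j).riemannSum (s n)) := by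
      rw [hEdef, TaggedDiv.copy_riemannSum, TaggedDiv.copy_riemannSum, hE₀1, hE₀1,
        ← Finset.sum_sub_distrib]
    calc (∑ j ∈ Finset.range D.n, if n < m (D.t j)
          then (s (n+1) (D.t j) - s n (D.t j)) * (D.u (j+1) - D.u j) else 0)
        ≤ ∑ j ∈ Finset.range D.n, ((G j).riemannSum (s (n+1)) - (G j).riemannSum (s n)) :=
          Finset.sum_le_sum fun j hj => (hG j (Finset.mem_range.mp hj)).2.2
      _ = E.riemannSum (s (n+1)) - E.riemannSum (s n) := hsum.symm
      _ ≤ (S (n+1) - S n) + (η * (1/2)^(n+1) + η * (1/2)^(n+2)) := by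
          have ha1 := h1.1
          have hb2 := h2.2
          have : (1/2:ℝ)^(n+1+1) = (1/2:ℝ)^(n+2) := by norm_num
          rw [this] at hb2
          linarith
  -- telescoping representation of s (m (t j)) (t j)
  have hT : ∀ j < D.n, s (m (D.t j)) (D.t j) = s N (D.t j) +
      ∑ i ∈ Finset.Ico N M, (if i < m (D.t j) then s (i+1) (D.t j) - s i (D.t j) else 0) := by
    intro j hj
    have h1 : ∑ i ∈ Finset.Ico N (m (D.t j)), (s (i+1) (D.t j) - s i (D.t j))
        = s (m (D.t j)) (D.t j) - s N (D.t j) := by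
      rw [Finset.sum_Ico_eq_sub _ (hmN (D.t j)),
        Finset.sum_range_sub (fun i => s i (D.t j)),
        Finset.sum_range_sub (fun i => s i (D.t j))]
      ring
    have h2 : (∑ i ∈ Finset.Ico N M, if i < m (D.t j) then s (i+1) (D.t j) - s i (D.t j) else 0)
        = ∑ i ∈ Finset.Ico N (m (D.t j)), (s (i+1) (D.t j) - s i (D.t j)) := by
      rw [← Finset.sum_filter]
      congr 1
      have := hmM j hj
      have := hmN (D.t j)
      ext i
      simp only [Finset.mem_filter, Finset.mem_Ico]
      omega
    rw [h2, h1]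
    ring
  -- sum manipulation
  have hTsum : (∑ j ∈ Finset.range D.n, s (m (D.t j)) (D.t j) * (D.u (j+1) - D.u j))
      = D.riemannSum (s N) + ∑ i ∈ Finset.Ico N M, ∑ j ∈ Finset.range D.n,
          (if i < m (D.t j) then (s (i+1) (D.t j) - s i (D.t j)) * (D.u (j+1) - D.u j) else 0) := by
    rw [Finset.sum_comm, TaggedDiv.riemannSum, ← Finset.sum_add_distrib]
    refine Finset.sum_congr rfl fun j hj => ?_
    have hj' := Finset.mem_range.mp hj
    rw [hT j hj', add_mul, Finset.sum_mul]
    congr 1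
    refine Finset.sum_congr rfl fun i _ => ?_
    split <;> simp
  -- bounding the double sum
  have hgeo : ∀ K : ℕ, ∑ i ∈ Finset.range K, (η * (1/2:ℝ)^(i+1)) ≤ η := by
    intro K
    have h := Finset.sum_range_sub' (fun i => η * (1/2:ℝ)^i) K
    have he : (∑ i ∈ Finset.range K, (η * (1/2:ℝ)^(i+1)))
        = ∑ i ∈ Finset.range K, (η * (1/2:ℝ)^i - η * (1/2:ℝ)^(i+1)) := by
      refine Finset.sum_congr rfl fun i _ => ?_
      ring
    rw [he, h]
    simp only [pow_zero, mul_one]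
    nlinarith [pow_nonneg (by norm_num : (0:ℝ) ≤ 1/2) K]
  have hUsum : (∑ i ∈ Finset.Ico N M, ∑ j ∈ Finset.range D.n,
        (if i < m (D.t j) then (s (i+1) (D.t j) - s i (D.t j)) * (D.u (j+1) - D.u j) else 0))
      ≤ (S M - S N) + 2*η := by
    have step1 : (∑ i ∈ Finset.Ico N M, ∑ j ∈ Finset.range D.n,
          (if i < m (D.t j) then (s (i+1) (D.t j) - s i (D.t j)) * (D.u (j+1) - D.u j) else 0))
        ≤ ∑ i ∈ Finset.Ico N M, ((S (i+1) - S i) + (η * (1/2)^(i+1) + η * (1/2)^(i+2))) :=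
      Finset.sum_le_sum fun i _ => keyU i
    have step2 : (∑ i ∈ Finset.Ico N M, (S (i+1) - S i)) = S M - S N := by
      rw [Finset.sum_Ico_eq_sub _ hNM, Finset.sum_range_sub (fun i => S i),
        Finset.sum_range_sub (fun i => S i)]
      ring
    have step3 : (∑ i ∈ Finset.Ico N M, (η * (1/2:ℝ)^(i+1) + η * (1/2:ℝ)^(i+2))) ≤ 2*η := by
      have hsub : (∑ i ∈ Finset.Ico N M, (η * (1/2:ℝ)^(i+1) + η * (1/2:ℝ)^(i+2)))
          ≤ ∑ i ∈ Finset.range M, (η * (1/2:ℝ)^(i+1) + η * (1/2:ℝ)^(i+2)) := by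
        refine Finset.sum_le_sum_of_subset_of_nonneg ?_ ?_
        · intro i hi
          simp only [Finset.mem_Ico] at hi
          exact Finset.mem_range.mpr hi.2
        · intro i _ _
          positivity
      have hsplit : (∑ i ∈ Finset.range M, (η * (1/2:ℝ)^(i+1) + η * (1/2:ℝ)^(i+2)))
          = (∑ i ∈ Finset.range M, η * (1/2:ℝ)^(i+1))
            + ∑ i ∈ Finset.range M, η * (1/2:ℝ)^(i+2) := Finset.sum_add_distrib
      have hsecond : (∑ i ∈ Finset.range M, η * (1/2:ℝ)^(i+2))
          ≤ ∑ i ∈ Finset.range M, η * (1/2:ℝ)^(i+1) := by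
        refine Finset.sum_le_sum fun i _ => ?_
        have : (1/2:ℝ)^(i+2) ≤ (1/2:ℝ)^(i+1) :=
          pow_le_pow_of_le_one (by norm_num) (by norm_num) (by omega)
        nlinarith
      have := hgeo M
      linarith
    calc _ ≤ ∑ i ∈ Finset.Ico N M, ((S (i+1) - S i) + (η * (1/2)^(i+1) + η * (1/2)^(i+2))) := step1
      _ = (∑ i ∈ Finset.Ico N M, (S (i+1) - S i))
            + ∑ i ∈ Finset.Ico N M, (η * (1/2:ℝ)^(i+1) + η * (1/2:ℝ)^(i+2)) :=
          Finset.sum_add_distrib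
      _ ≤ (S M - S N) + 2*η := by rw [step2]; linarith
  -- final upper bound
  have hΔ : (∑ j ∈ Finset.range D.n, (D.u (j+1) - D.u j)) = b - a := by
    rw [Finset.sum_range_sub (fun j => D.u j), D.left, D.right]
  have hup : D.riemannSum f ≤ F + 4*η := by
    have h1 : D.riemannSum f ≤ (∑ j ∈ Finset.range D.n,
        s (m (D.t j)) (D.t j) * (D.u (j+1) - D.u j)) + η := by
      have ha1 : D.riemannSum f ≤ ∑ j ∈ Finset.range D.n,
          (s (m (D.t j)) (D.t j) + η/(b-a)) * (D.u (j+1) - D.u j) := by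
        refine Finset.sum_le_sum fun j hj => ?_
        have hj' := Finset.mem_range.mp hj
        have := hmf (D.t j) (htm j hj')
        exact mul_le_mul_of_nonneg_right (by linarith) (sub_nonneg.mpr (D.mono j hj').le)
      have ha2 : (∑ j ∈ Finset.range D.n,
          (s (m (D.t j)) (D.t j) + η/(b-a)) * (D.u (j+1) - D.u j))
          = (∑ j ∈ Finset.range D.n, s (m (D.t j)) (D.t j) * (D.u (j+1) - D.u j))
            + (η/(b-a)) * (b - a) := by
        rw [← hΔ, Finset.mul_sum, ← Finset.sum_add_distrib]
        refine Finset.sum_congr rfl fun j _ => by ring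
      have ha3 : (η/(b-a)) * (b - a) = η := by field_simp
      rw [ha2, ha3] at ha1
      exact ha1
    have h2 : D.riemannSum (s N) < S N + η := by
      have := hpow N
      linarith [hRN.2]
    have h3 : (∑ j ∈ Finset.range D.n, s (m (D.t j)) (D.t j) * (D.u (j+1) - D.u j))
        ≤ D.riemannSum (s N) + ((S M - S N) + 2*η) := by
      rw [hTsum]
      linarith [hUsum]
    have := hSF M
    linarith
  rw [abs_lt]
  constructor
  · linarith
  · linarith
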